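/- For every even n ≥ 4, the cycle C_n admits a unit grid intersection representation; and no odd cycle admits a unit grid intersection representation. -/

import Mathlib

/-!
Parallel segments of a unit grid representation are disjoint, so adjacent vertices get segments
of different orientations: the orientation is a proper 2-colouring, which rules out odd cycles.
For `C_{2m}` all endpoints are placed on the grid of mesh `1/m`, where each incidence condition
becomes a system of integer inequalities.
-/

open Set

/-- The closed horizontal unit segment with left endpoint `p`. -/
def hseg (p : ℝ × ℝ) : Set (ℝ × ℝ) := {q | q.2 = p.2 ∧ q.1 ∈ Set.Icc p.1 (p.1 + 1)}

/-- The closed vertical unit segment with bottom endpoint `p`. -/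
def vseg (p : ℝ × ℝ) : Set (ℝ × ℝ) := {q | q.1 = p.1 ∧ q.2 ∈ Set.Icc p.2 (p.2 + 1)}

/-- The unit axis-parallel segment with endpoint `p`, horizontal if `h = true`. -/
def useg (h : Bool) (p : ℝ × ℝ) : Set (ℝ × ℝ) := if h then hseg p else vseg p

/-- A unit grid intersection representation of a graph `G`: every vertex is assigned a
unit axis-parallel segment, segments of the same orientation are pairwise disjoint, and
two distinct vertices are adjacent iff their segments intersect. -/
structure UGIGRep {V : Type*} (G : SimpleGraph V) where
  horiz : V → Bool
  base : V → ℝ × ℝ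
  same_disj : ∀ u v : V, u ≠ v → horiz u = horiz v →
    Disjoint (useg (horiz u) (base u)) (useg (horiz v) (base v))
  adj_iff : ∀ u v : V, u ≠ v →
    (G.Adj u v ↔ (useg (horiz u) (base u) ∩ useg (horiz v) (base v)).Nonempty)

/-- A graph is a unit grid intersection graph if it has a UGIG representation. -/
def IsUGIG {V : Type*} (G : SimpleGraph V) : Prop := Nonempty (UGIGRep G)

open SimpleGraph

lemma hseg_inter_vseg_nonempty_iff (p q : ℝ × ℝ) :
    (hseg p ∩ vseg q).Nonempty ↔ p.1 ≤ q.1 ∧ q.1 ≤ p.1 + 1 ∧ q.2 ≤ p.2 ∧ p.2 ≤ q.2 + 1 := by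
  constructor
  · rintro ⟨z, ⟨hz₂, hz₁⟩, hq₁, hq₂⟩
    rw [hz₂] at hq₂
    rw [hq₁] at hz₁
    exact ⟨hz₁.1, hz₁.2, hq₂.1, hq₂.2⟩
  · rintro ⟨h₁, h₂, h₃, h₄⟩
    exact ⟨(q.1, p.2), ⟨rfl, h₁, h₂⟩, rfl, h₃, h₄⟩

lemma disjoint_hseg {p q : ℝ × ℝ} (h : p.2 ≠ q.2) : Disjoint (hseg p) (hseg q) :=
  Set.disjoint_left.2 fun _ hp hq => h (hp.1.symm.trans hq.1)

lemma disjoint_vseg {p q : ℝ × ℝ} (h : p.1 ≠ q.1) : Disjoint (vseg p) (vseg q) :=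
  Set.disjoint_left.2 fun _ hp hq => h (hp.1.symm.trans hq.1)

namespace UGIGRep

variable {V : Type*} {G : SimpleGraph V}

lemma horiz_ne_of_adj (R : UGIGRep G) {u v : V} (h : G.Adj u v) : R.horiz u ≠ R.horiz v :=
  fun heq => Set.not_disjoint_iff_nonempty_inter.2 ((R.adj_iff u v h.ne).1 h)
    (R.same_disj u v h.ne heq)

end UGIGRep

theorem IsUGIG.isBipartite {V : Type*} {G : SimpleGraph V} (h : IsUGIG G) : G.IsBipartite :=
  h.elim fun R => (Coloring.mk R.horiz R.horiz_ne_of_adj).colorable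

theorem not_isUGIG_cycleGraph_of_odd {n : ℕ} (hn : 2 ≤ n) (hodd : Odd n) :
    ¬ IsUGIG (cycleGraph n) := fun h => by
  have := h.isBipartite.chromaticNumber_le
  rw [chromaticNumber_cycleGraph_of_odd n hn hodd] at this
  exact absurd this (by decide)

noncomputable def gridPoint (N : ℕ) (p : ℤ × ℤ) : ℝ × ℝ := ((p.1 : ℝ) / N, (p.2 : ℝ) / N)

def GridCrosses (N : ℕ) (p q : ℤ × ℤ) : Prop :=
  p.1 ≤ q.1 ∧ q.1 ≤ p.1 + N ∧ q.2 ≤ p.2 ∧ p.2 ≤ q.2 + N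

section Grid

variable {N : ℕ}

lemma intCast_div_natCast_le_iff (hN : 0 < N) {a b : ℤ} : (a : ℝ) / N ≤ b / N ↔ a ≤ b := by
  rw [div_le_div_iff_of_pos_right (by exact_mod_cast hN)]
  exact Int.cast_le

lemma intCast_div_natCast_le_add_one_iff (hN : 0 < N) {a b : ℤ} :
    (a : ℝ) / N ≤ b / N + 1 ↔ a ≤ b + N := by
  rw [div_add_one (by positivity), ← intCast_div_natCast_le_iff hN (b := b + N)]
  push_cast
  rfl

lemma intCast_div_natCast_injective (hN : 0 < N) :
    Function.Injective fun a : ℤ => (a : ℝ) / N :=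
  fun _ _ h => Int.cast_injective ((div_left_inj' (by positivity)).1 h)

lemma hseg_inter_vseg_gridPoint_nonempty_iff (hN : 0 < N) (p q : ℤ × ℤ) :
    (hseg (gridPoint N p) ∩ vseg (gridPoint N q)).Nonempty ↔ GridCrosses N p q := by
  simp only [hseg_inter_vseg_nonempty_iff, gridPoint, GridCrosses,
    intCast_div_natCast_le_iff hN, intCast_div_natCast_le_add_one_iff hN]

end Grid

theorem IsUGIG.of_grid {V : Type*} {G : SimpleGraph V} {N : ℕ} (hN : 0 < N)
    (horiz : V → Bool) (pt : V → ℤ × ℤ)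
    (h_hsep : ∀ u v, u ≠ v → horiz u = true → horiz v = true → (pt u).2 ≠ (pt v).2)
    (h_vsep : ∀ u v, u ≠ v → horiz u = false → horiz v = false → (pt u).1 ≠ (pt v).1)
    (h_bip : ∀ u v, G.Adj u v → horiz u ≠ horiz v)
    (h_cross : ∀ u v, horiz u = true → horiz v = false →
      (G.Adj u v ↔ GridCrosses N (pt u) (pt v))) :
    IsUGIG G := by
  have same_disj : ∀ u v, u ≠ v → horiz u = horiz v →
      Disjoint (useg (horiz u) (gridPoint N (pt u))) (useg (horiz v) (gridPoint N (pt v))) := by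
    intro u v huv heq
    cases hu : horiz u <;> rw [hu] at heq <;> rw [← heq]
    · exact disjoint_vseg ((intCast_div_natCast_injective hN).ne (h_vsep u v huv hu heq.symm))
    · exact disjoint_hseg ((intCast_div_natCast_injective hN).ne (h_hsep u v huv hu heq.symm))
  refine ⟨⟨horiz, gridPoint N ∘ pt, same_disj, fun u v huv => ?_⟩⟩
  by_cases heq : horiz u = horiz v
  · exact iff_of_false (fun h => h_bip u v h heq)
      (Set.not_nonempty_iff_eq_empty.2 (same_disj u v huv heq).inter_eq)
  cases hu : horiz u <;> cases hv : horiz v <;> simp only [hu, hv, not_true] at heq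
  · rw [G.adj_comm, h_cross v u hv hu, Set.inter_comm]
    exact (hseg_inter_vseg_gridPoint_nonempty_iff hN _ _).symm
  · rw [h_cross u v hu hv]
    exact (hseg_inter_vseg_gridPoint_nonempty_iff hN _ _).symm

lemma cycleGraph_adj_iff_val {n : ℕ} (hn : n ≠ 1) {u v : Fin n} :
    (cycleGraph n).Adj u v ↔ u.val + 1 = v.val ∨ v.val + 1 = u.val ∨
      (u.val = 0 ∧ v.val + 1 = n) ∨ (v.val = 0 ∧ u.val + 1 = n) := by
  rw [cycleGraph_adj']
  rcases lt_trichotomy u v with h | rfl | h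
  · rw [Fin.coe_sub_iff_lt.2 h, Fin.coe_sub_iff_le.2 h.le]
    have := Fin.lt_def.1 h
    omega
  · rw [Fin.coe_sub_iff_le.2 le_rfl]
    omega
  · rw [Fin.coe_sub_iff_lt.2 h, Fin.coe_sub_iff_le.2 h.le]
    have := Fin.lt_def.1 h
    omega

/-- Vertex `2j` of `C_{2m}` becomes the horizontal segment `H_j`, vertex `2j+1` the vertical
`V_j`, with endpoints scaled by `1/m`. The `H_j` with `j ≥ 1` form a descending staircase and the
middle `V_j` joins the right end of `H_j` to `H_{j+1}`; `H_0` lies below the staircase, `V_0`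
joins it to the left end of `H_1`, and `V_{m-1}` joins its right end to `H_{m-1}`. -/
def cyclePoint (m v : ℕ) : ℤ × ℤ :=
  if v % 2 = 0 then
    if v / 2 = 0 then (0, 0) else (v / 2, m + 1 - v / 2)
  else
    if v / 2 = 0 then (1, 0) else if v / 2 + 1 = m then (m, 2 - m) else (m + v / 2, m - v / 2)

theorem isUGIG_cycleGraph_two_mul {m : ℕ} (hm : 0 < m) : IsUGIG (cycleGraph (2 * m)) := by
  refine IsUGIG.of_grid hm (fun v => decide (v.val % 2 = 0)) (fun v => cyclePoint m v.val)
    ?_ ?_ ?_ ?_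
  · intro u v huv hu hv
    have := Fin.val_ne_of_ne huv
    simp only [decide_eq_true_iff] at hu hv
    simp only [cyclePoint, hu, hv, if_true]
    split_ifs <;> omega
  · intro u v huv hu hv
    have := Fin.val_ne_of_ne huv
    simp only [decide_eq_false_iff_not] at hu hv
    simp only [cyclePoint, hu, hv, if_false]
    split_ifs <;> omega
  · intro u v h
    rw [cycleGraph_adj_iff_val (by omega)] at h
    simp only [ne_eq, decide_eq_decide]
    omega
  · intro u v hu hv
    have := u.isLt
    have := v.isLt
    simp only [decide_eq_true_iff, decide_eq_false_iff_not] at hu hv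
    rw [cycleGraph_adj_iff_val (by omega)]
    simp only [cyclePoint, hu, hv, if_true, if_false, GridCrosses]
    split_ifs <;> omega

/-- Every even cycle `C_n` with `n ≥ 4` is a unit grid intersection graph, and no odd
cycle is a unit grid intersection graph. -/
theorem stmt3 (n : ℕ) :
    (4 ≤ n → Even n → IsUGIG (SimpleGraph.cycleGraph n)) ∧
    (3 ≤ n → Odd n → ¬ IsUGIG (SimpleGraph.cycleGraph n)) := by
  refine ⟨fun h4 heven => ?_, fun h3 hodd => not_isUGIG_cycleGraph_of_odd (by omega) hodd⟩
  obtain ⟨m, rfl⟩ := heven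
  rw [← two_mul]
  exact isUGIG_cycleGraph_two_mul (by omega)
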